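/- For integers n_k > ⋯ > n_1 ≥ 1 and m_l > ⋯ > m_1 ≥ 1 and any x_1,…,x_k, y_1,…,y_l ∈ {1,−1}: (i) P(ξ̃_{α_{n_i}} = x_i for 1 ≤ i ≤ k, ξ̃_{β_{m_j}} = y_j for 1 ≤ j ≤ l, α_{n_k} > β_{m_l}) = (1/2)·P(ξ̃_{α_{n_i}} = x_i for 1 ≤ i ≤ k−1, ξ̃_{β_{m_j}} = y_j for 1 ≤ j ≤ l, α_{n_k} > β_{m_l}); and (ii) P(ξ̃_{α_{n_i}} = x_i for 1 ≤ i ≤ k, ξ̃_{β_{m_j}} = y_j for 1 ≤ j ≤ l, α_{n_k} < β_{m_l}) = (1/2)·P(ξ̃_{α_{n_i}} = x_i for 1 ≤ i ≤ k, ξ̃_{β_{m_j}} = y_j for 1 ≤ j ≤ l−1, α_{n_k} < β_{m_l}). -/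

import Mathlib

open MeasureTheory ProbabilityTheory Filter Set

noncomputable section

variable {Ω : Type*}

/-- `Q n = 1` if the `n`-th moves agree, `0` if they are opposite. -/
def Qproc (ξ η : ℕ → Ω → ℝ) (n : ℕ) (ω : Ω) : ℕ :=
  if ξ n ω = η n ω then 1 else 0

/-- `T n = ∑_{k=1}^n Q k`, the number of common movements up to step `n`. -/
def Tproc (ξ η : ℕ → Ω → ℝ) (n : ℕ) (ω : Ω) : ℕ :=
  ∑ k ∈ Finset.Icc 1 n, Qproc ξ η k ω

/-- `S n = n - T n`, the number of counter movements up to step `n`. -/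
def Sproc (ξ η : ℕ → Ω → ℝ) (n : ℕ) (ω : Ω) : ℕ :=
  n - Tproc ξ η n ω

/-- `α n = inf {k ≥ 1 : T k = n}`, with `inf ∅ = ⊤`, valued in `ℕ∞`. -/
def alphaProc (ξ η : ℕ → Ω → ℝ) (n : ℕ) (ω : Ω) : ℕ∞ :=
  ⨅ (k : ℕ) (_ : 1 ≤ k ∧ Tproc ξ η k ω = n), (k : ℕ∞)

/-- `β n = inf {k ≥ 1 : S k = n}`, with `inf ∅ = ⊤`, valued in `ℕ∞`. -/
def betaProc (ξ η : ℕ → Ω → ℝ) (n : ℕ) (ω : Ω) : ℕ∞ :=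
  ⨅ (k : ℕ) (_ : 1 ≤ k ∧ Sproc ξ η k ω = n), (k : ℕ∞)

/-- `ξ̃_{α n}`: equal to `ξ_i` on `{α n = i}` (`i < ∞`) and to `ζ n` on `{α n = ∞}`. -/
def xiAlpha (ξ η ζ : ℕ → Ω → ℝ) (n : ℕ) (ω : Ω) : ℝ :=
  if alphaProc ξ η n ω = ⊤ then ζ n ω else ξ (alphaProc ξ η n ω).toNat ω

/-- `ξ̃_{β m}`: equal to `ξ_i` on `{β m = i}` (`i < ∞`) and to `ψ m` on `{β m = ∞}`. -/
def xiBeta (ξ η ψ : ℕ → Ω → ℝ) (m : ℕ) (ω : Ω) : ℝ :=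
  if betaProc ξ η m ω = ⊤ then ψ m ω else ξ (betaProc ξ η m ω).toNat ω

/-- The common-movement walk `X n = ∑_{i=1}^n ξ̃_{α i}`. -/
def Xproc (ξ η ζ : ℕ → Ω → ℝ) (n : ℕ) (ω : Ω) : ℝ :=
  ∑ i ∈ Finset.Icc 1 n, xiAlpha ξ η ζ i ω

/-- The counter-movement walk `Y n = ∑_{i=1}^n ξ̃_{β i}`. -/
def Yproc (ξ η ψ : ℕ → Ω → ℝ) (n : ℕ) (ω : Ω) : ℝ :=
  ∑ i ∈ Finset.Icc 1 n, xiBeta ξ η ψ i ω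

/-!
Split the event according to the value of `α_N`, `N = n_k`. On `{α_N = i + 1}` every other
constraint is decided by time `i`: it concerns earlier common moves, and the counter moves up to
`β_M < α_N`. Moreover `{α_N = i + 1} = {T_i = N - 1} ∩ {ξ_{i+1} = η_{i+1}}` and `ξ̃_{α_N} = ξ_{i+1}`
there. For `B ∈ F_i`, fairness of `ξ_{i+1}` and `η_{i+1}` given `F_i` yields
`P(B, ξ = η = 1) = P(B, ξ = 1) - P(B, ξ = 1, η = -1) = P(B, η = -1) - P(B, ξ = 1, η = -1)
= P(B, ξ = η = -1)`, so `ξ̃_{α_N}` is a fair coin on each such piece. On `{α_N = ∞}` we have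
`ξ̃_{α_N} = ζ_N`, which is independent of `F_∞`, of the other `ζ`'s and of the `ψ`'s, hence of
the rest of the event. Part (ii) is part (i) for the pair `(ξ, -η)`, which exchanges common and
counter moves.
-/

lemma measure_inter_eq_mul_of_fiberwise {β : Type*} [Countable β] {mΩ : MeasurableSpace Ω}
    {μ : Measure Ω} {f : Ω → β} (hf : ∀ b, MeasurableSet {ω | f ω = b}) {E X : Set Ω}
    {r : ENNReal} (h : ∀ b, μ (E ∩ {ω | f ω = b} ∩ X) = r * μ (E ∩ {ω | f ω = b})) :
    μ (E ∩ X) = r * μ E := by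
  have hsum : ∀ S, μ S = ∑' b, μ (S ∩ {ω | f ω = b}) := fun S => calc
    μ S = μ.restrict S (⋃ b, {ω | f ω = b}) := by
      rw [iUnion_eq_univ_iff.2 fun ω => ⟨f ω, rfl⟩, Measure.restrict_apply_univ]
    _ = ∑' b, μ.restrict S {ω | f ω = b} :=
      measure_iUnion (fun b c hbc => (disjoint_singleton.2 hbc).preimage f) hf
    _ = ∑' b, μ (S ∩ {ω | f ω = b}) := by simp [Measure.restrict_apply (hf _), inter_comm]
  rw [hsum (E ∩ X), hsum E, ← ENNReal.tsum_mul_left]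
  exact tsum_congr fun b => by rw [← h b, inter_right_comm]

lemma ProbabilityTheory.iIndep.indep_iSup_compl_singleton {ι : Type*} {mΩ : MeasurableSpace Ω}
    {μ : Measure Ω} {m : ι → MeasurableSpace Ω} (h_le : ∀ i, m i ≤ mΩ) (h : iIndep m μ) (i : ι) :
    Indep (⨆ j ∈ ({i}ᶜ : Set ι), m j) (m i) μ := by
  simpa only [iSup_singleton] using indep_iSup_of_disjoint h_le h (disjoint_compl_left (a := {i}))

lemma le_iSup_compl_singleton {α ι : Type*} [CompleteLattice α] {f : ι → α} {i j : ι}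
    (h : j ≠ i) : f j ≤ ⨆ k ∈ ({i}ᶜ : Set ι), f k :=
  le_iSup₂ (f := fun k (_ : k ∈ ({i}ᶜ : Set ι)) => f k) j h

section Walks

variable (ξ η : ℕ → Ω → ℝ)

lemma Qproc_le_one (n : ℕ) (ω : Ω) : Qproc ξ η n ω ≤ 1 := by
  unfold Qproc; split <;> omega

@[simp]
lemma Tproc_zero (ω : Ω) : Tproc ξ η 0 ω = 0 := by simp [Tproc]

lemma Tproc_succ (t : ℕ) (ω : Ω) :
    Tproc ξ η (t + 1) ω = Tproc ξ η t ω + Qproc ξ η (t + 1) ω :=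
  Finset.sum_Icc_succ_top (by omega) _

lemma Tproc_mono (ω : Ω) : Monotone (Tproc ξ η · ω) :=
  fun _ _ h => Finset.sum_le_sum_of_subset (Finset.Icc_subset_Icc le_rfl h)

lemma exists_Tproc_eq_of_le {n t : ℕ} {ω : Ω} (h : n ≤ Tproc ξ η t ω) :
    ∃ s ≤ t, Tproc ξ η s ω = n := by
  induction t with
  | zero => exact ⟨0, le_rfl, by simp_all⟩
  | succ t ih =>
    by_cases ht : n ≤ Tproc ξ η t ω
    · obtain ⟨s, hs, hs'⟩ := ih ht
      exact ⟨s, by omega, hs'⟩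
    · have := Tproc_succ ξ η t ω
      have := Qproc_le_one ξ η (t + 1) ω
      exact ⟨t + 1, le_rfl, by omega⟩

variable {ξ η}

lemma alphaProc_le_coe_iff {n : ℕ} (hn : 1 ≤ n) (t : ℕ) (ω : Ω) :
    alphaProc ξ η n ω ≤ t ↔ n ≤ Tproc ξ η t ω := by
  constructor
  · intro h
    obtain ⟨s, hs, hst⟩ : ∃ s, (1 ≤ s ∧ Tproc ξ η s ω = n) ∧ (s : ℕ∞) < (t + 1 : ℕ) := by
      simpa [alphaProc, iInf_lt_iff] using h.trans_lt (Nat.cast_lt.2 t.lt_succ_self)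
    rw [← hs.2]
    exact Tproc_mono ξ η ω (Nat.lt_succ_iff.1 (Nat.cast_lt.1 hst))
  · intro h
    obtain ⟨s, hst, hs⟩ := exists_Tproc_eq_of_le ξ η h
    have hs1 : 1 ≤ s := Nat.one_le_iff_ne_zero.2 fun h0 => by simp [h0] at hs; omega
    exact (iInf₂_le s ⟨hs1, hs⟩).trans (by exact_mod_cast hst)

lemma alphaProc_ne_zero {n : ℕ} (hn : 1 ≤ n) (ω : Ω) : alphaProc ξ η n ω ≠ 0 := fun h => by
  have := (alphaProc_le_coe_iff (ξ := ξ) (η := η) hn 0 ω).1 (by rw [h]; rfl)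
  simp at this; omega

lemma alphaProc_mono {n n' : ℕ} (hn : 1 ≤ n) (h : n ≤ n') (ω : Ω) :
    alphaProc ξ η n ω ≤ alphaProc ξ η n' ω := by
  induction hα : alphaProc ξ η n' ω using ENat.recTopCoe with
  | top => exact le_top
  | coe t =>
    exact (alphaProc_le_coe_iff hn t ω).2
      (h.trans ((alphaProc_le_coe_iff (hn.trans h) t ω).1 hα.le))

lemma alphaProc_eq_add_one_iff {N : ℕ} (hN : 1 ≤ N) (i : ℕ) (ω : Ω) :
    alphaProc ξ η N ω = i + 1 ↔ Tproc ξ η i ω + 1 = N ∧ ξ (i + 1) ω = η (i + 1) ω := by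
  have hsucc : alphaProc ξ η N ω = i + 1 ↔
      alphaProc ξ η N ω ≤ (i + 1 : ℕ) ∧ ¬ alphaProc ξ η N ω ≤ i := by
    induction alphaProc ξ η N ω using ENat.recTopCoe with
    | top => simp [eq_comm]
    | coe a => norm_cast; omega
  rw [hsucc, alphaProc_le_coe_iff hN, alphaProc_le_coe_iff hN, Tproc_succ]
  unfold Qproc
  split_ifs with h <;> simp only [h, and_true, and_false, iff_false, add_zero] <;> omega

lemma alphaProc_lt_of_lt {n N : ℕ} (hn : 1 ≤ n) (hnN : n < N) {ω : Ω}
    (hN : alphaProc ξ η N ω ≠ ⊤) : alphaProc ξ η n ω < alphaProc ξ η N ω := by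
  obtain ⟨t, ht⟩ := ENat.ne_top_iff_exists.1 hN
  cases t with
  | zero => exact absurd ht.symm (alphaProc_ne_zero (hn.trans hnN.le) ω)
  | succ i =>
    rw [Nat.cast_succ] at ht
    have := ((alphaProc_eq_add_one_iff (hn.trans hnN.le) i ω).1 ht.symm).1
    rw [← ht]
    exact ENat.lt_natCast_add_one_iff.2 ((alphaProc_le_coe_iff hn i ω).2 (by omega))

lemma xiAlpha_of_eq_coe (ζ : ℕ → Ω → ℝ) {n t : ℕ} {ω : Ω} (h : alphaProc ξ η n ω = t) :
    xiAlpha ξ η ζ n ω = ξ t ω := by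
  simp [xiAlpha, h]

lemma xiAlpha_of_eq_top (ζ : ℕ → Ω → ℝ) {n : ℕ} {ω : Ω} (h : alphaProc ξ η n ω = ⊤) :
    xiAlpha ξ η ζ n ω = ζ n ω := by
  simp [xiAlpha, h]

lemma Sproc_eq_Tproc_neg (hξ : ∀ n ω, ξ n ω = 1 ∨ ξ n ω = -1)
    (hη : ∀ n ω, η n ω = 1 ∨ η n ω = -1) : Sproc ξ η = Tproc ξ (-η) := by
  ext n ω
  have hQ : ∀ k, Qproc ξ η k ω + Qproc ξ (-η) k ω = 1 := fun k => by
    unfold Qproc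
    rcases hξ k ω with h | h <;> rcases hη k ω with h' | h' <;> norm_num [h, h']
  have hT : Tproc ξ η n ω + Tproc ξ (-η) n ω = n := by
    simp [Tproc, ← Finset.sum_add_distrib, hQ]
  unfold Sproc
  omega

lemma betaProc_eq_alphaProc_neg (hξ : ∀ n ω, ξ n ω = 1 ∨ ξ n ω = -1)
    (hη : ∀ n ω, η n ω = 1 ∨ η n ω = -1) : betaProc ξ η = alphaProc ξ (-η) := by
  ext n ω
  simp only [betaProc, alphaProc, Sproc_eq_Tproc_neg hξ hη]

lemma xiBeta_eq_xiAlpha_neg (ψ : ℕ → Ω → ℝ) (hξ : ∀ n ω, ξ n ω = 1 ∨ ξ n ω = -1)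
    (hη : ∀ n ω, η n ω = 1 ∨ η n ω = -1) : xiBeta ξ η ψ = xiAlpha ξ (-η) ψ := by
  ext n ω
  simp only [xiBeta, xiAlpha, betaProc_eq_alphaProc_neg hξ hη]

end Walks

section StoppingTimes

variable {mΩ : MeasurableSpace Ω} {F : Filtration ℕ mΩ} {ξ η : ℕ → Ω → ℝ}
  (hξ : ∀ n, 1 ≤ n → Measurable[F n] (ξ n)) (hη : ∀ n, 1 ≤ n → Measurable[F n] (η n))
include hξ hη

lemma measurable_Tproc (t : ℕ) : Measurable[F t] (Tproc ξ η t) := by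
  refine Finset.measurable_sum _ fun k hk => ?_
  obtain ⟨hk1, hkt⟩ := Finset.mem_Icc.1 hk
  have hξk := (hξ k hk1).mono (F.mono hkt) le_rfl
  have hηk := (hη k hk1).mono (F.mono hkt) le_rfl
  exact Measurable.ite (measurableSet_eq_fun hξk hηk) measurable_const measurable_const

lemma isStoppingTime_alphaProc {n : ℕ} (hn : 1 ≤ n) : IsStoppingTime F (alphaProc ξ η n) := by
  intro t
  have : {ω | alphaProc ξ η n ω ≤ t} = {ω | n ≤ Tproc ξ η t ω} := by
    ext ω
    exact alphaProc_le_coe_iff hn t ω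
  exact this ▸ measurable_Tproc hξ hη t measurableSet_Ici

lemma measurableSet_alphaProc_eq_inter_xiAlpha (ζ : ℕ → Ω → ℝ) {n : ℕ} (hn : 1 ≤ n) (t : ℕ)
    (v : ℝ) : MeasurableSet[F t] ({ω | alphaProc ξ η n ω = t} ∩ {ω | xiAlpha ξ η ζ n ω = v}) := by
  cases t with
  | zero =>
    convert @MeasurableSet.empty _ (F 0)
    ext ω
    simpa using fun h => absurd h (alphaProc_ne_zero hn ω)
  | succ i =>
    have : {ω | alphaProc ξ η n ω = (i + 1 : ℕ)} ∩ {ω | xiAlpha ξ η ζ n ω = v}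
        = {ω | alphaProc ξ η n ω = (i + 1 : ℕ)} ∩ {ω | ξ (i + 1) ω = v} := by
      ext ω
      simp only [mem_inter_iff, mem_ofPred_eq, and_congr_right_iff]
      exact fun h => by rw [xiAlpha_of_eq_coe ζ h]
    exact this ▸ ((isStoppingTime_alphaProc hξ hη hn).measurableSet_eq (i + 1)).inter
      (hξ (i + 1) (by omega) (measurableSet_singleton v))

lemma measurableSet_xiAlpha_inter_ne_top (ζ : ℕ → Ω → ℝ) {n M : ℕ} (hn : 1 ≤ n) (hnM : n ≤ M)
    (v : ℝ) : MeasurableSet[(isStoppingTime_alphaProc hξ hη (hn.trans hnM)).measurableSpace]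
      ({ω | xiAlpha ξ η ζ n ω = v} ∩ {ω | alphaProc ξ η M ω ≠ ⊤}) := by
  have hαn := isStoppingTime_alphaProc hξ hη hn
  have hαM := isStoppingTime_alphaProc hξ hη (hn.trans hnM)
  have hfin : {ω | xiAlpha ξ η ζ n ω = v} ∩ {ω | alphaProc ξ η n ω ≠ ⊤}
      = ⋃ t : ℕ, {ω | xiAlpha ξ η ζ n ω = v} ∩ {ω | alphaProc ξ η n ω = t} := by
    ext ω
    simp [ENat.ne_top_iff_exists, eq_comm]
  have hn_meas : MeasurableSet[hαn.measurableSpace]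
      ({ω | xiAlpha ξ η ζ n ω = v} ∩ {ω | alphaProc ξ η n ω ≠ ⊤}) := by
    rw [hfin]
    refine MeasurableSet.iUnion fun t => (IsStoppingTime.measurableSet_inter_eq_iff _ _ t).2 ?_
    rw [inter_comm]
    exact measurableSet_alphaProc_eq_inter_xiAlpha hξ hη ζ hn t v
  have : {ω | xiAlpha ξ η ζ n ω = v} ∩ {ω | alphaProc ξ η M ω ≠ ⊤}
      = {ω | xiAlpha ξ η ζ n ω = v} ∩ {ω | alphaProc ξ η n ω ≠ ⊤} ∩
        {ω | alphaProc ξ η M ω ≠ ⊤} := by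
    ext ω
    simp only [mem_inter_iff, mem_ofPred_eq]
    exact ⟨fun ⟨h, hM⟩ => ⟨⟨h, ne_top_of_le_ne_top hM (alphaProc_mono hn hnM ω)⟩, hM⟩,
      fun ⟨⟨h, _⟩, hM⟩ => ⟨h, hM⟩⟩
  rw [this]
  exact (IsStoppingTime.measurableSpace_mono hαn hαM (alphaProc_mono hn hnM) _ hn_meas).inter
    (hαM.measurable (measurableSet_singleton ⊤)).compl

lemma measurableSet_forall_xiAlpha_inter_ne_top {κ : Type*} [Countable κ] (ζ : ℕ → Ω → ℝ)
    {mm : κ → ℕ} {M : ℕ} (hm1 : ∀ j, 1 ≤ mm j) (hmM : ∀ j, mm j ≤ M) (hM : 1 ≤ M) (y : κ → ℝ) :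
    MeasurableSet[(isStoppingTime_alphaProc hξ hη hM).measurableSpace]
      ({ω | ∀ j, xiAlpha ξ η ζ (mm j) ω = y j} ∩ {ω | alphaProc ξ η M ω ≠ ⊤}) := by
  have : {ω | ∀ j, xiAlpha ξ η ζ (mm j) ω = y j} ∩ {ω | alphaProc ξ η M ω ≠ ⊤}
      = (⋂ j, {ω | xiAlpha ξ η ζ (mm j) ω = y j} ∩ {ω | alphaProc ξ η M ω ≠ ⊤})
        ∩ {ω | alphaProc ξ η M ω ≠ ⊤} := by
    ext ω
    simp only [mem_inter_iff, mem_iInter, mem_ofPred_eq, forall_and]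
    tauto
  rw [this]
  exact .inter (.iInter fun j => measurableSet_xiAlpha_inter_ne_top hξ hη ζ (hm1 j) (hmM j) _)
    ((isStoppingTime_alphaProc hξ hη hM).measurable (measurableSet_singleton ⊤)).compl

lemma measurableSet_xiAlpha {m : MeasurableSpace Ω} (hF : ∀ t, F t ≤ m) {ζ : ℕ → Ω → ℝ}
    {n : ℕ} (hζ : Measurable[m] (ζ n)) (hn : 1 ≤ n) (v : ℝ) :
    MeasurableSet[m] {ω | xiAlpha ξ η ζ n ω = v} := by
  have hα := isStoppingTime_alphaProc hξ hη hn
  have : {ω | xiAlpha ξ η ζ n ω = v} = ({ω | xiAlpha ξ η ζ n ω = v} ∩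
      {ω | alphaProc ξ η n ω ≠ ⊤}) ∪ ({ω | alphaProc ξ η n ω = ⊤} ∩ {ω | ζ n ω = v}) := by
    ext ω
    by_cases h : alphaProc ξ η n ω = ⊤ <;> simp [h, xiAlpha_of_eq_top]
  rw [this]
  exact (hα.measurableSpace_le'.trans (iSup_le hF) _
    (measurableSet_xiAlpha_inter_ne_top hξ hη ζ hn le_rfl v)).union
    ((iSup_le hF _ hα.measurableSet_eq_top').inter (hζ (measurableSet_singleton v)))

end StoppingTimes

section StrictPast

variable {mΩ : MeasurableSpace Ω}

/-- A version of the strict past `F_{τ-}` of `τ` that imposes no constraint on `{τ = ∞}`. -/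
@[reducible]
def strictPast (F : Filtration ℕ mΩ) (τ : Ω → ℕ∞) : MeasurableSpace Ω where
  MeasurableSet' E := ∀ i : ℕ, ∃ C, MeasurableSet[F i] C ∧
    E ∩ {ω | τ ω = i + 1} = C ∩ {ω | τ ω = i + 1}
  measurableSet_empty i := ⟨∅, @MeasurableSet.empty _ (F i), by simp⟩
  measurableSet_compl E hE i := by
    obtain ⟨C, hC, hEC⟩ := hE i
    refine ⟨Cᶜ, hC.compl, ?_⟩
    ext ω
    have := Set.ext_iff.1 hEC ω
    simp only [mem_inter_iff, mem_compl_iff] at this ⊢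
    tauto
  measurableSet_iUnion E hE i := by
    choose C hC hEC using fun j => hE j i
    exact ⟨⋃ j, C j, .iUnion hC, by simp only [iUnion_inter, hEC]⟩

variable {F : Filtration ℕ mΩ} {σ τ : Ω → ℕ∞}

lemma measurableSet_strictPast_inter_lt (hσ : IsStoppingTime F σ) {S : Set Ω}
    (hS : MeasurableSet[hσ.measurableSpace] (S ∩ {ω | σ ω ≠ ⊤})) :
    MeasurableSet[strictPast F τ] (S ∩ {ω | σ ω < τ ω}) := fun i => by
  refine ⟨S ∩ {ω | σ ω ≠ ⊤} ∩ {ω | σ ω ≤ i}, hS.2 i, ?_⟩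
  ext ω
  simp only [mem_inter_iff, mem_ofPred_eq]
  constructor
  · rintro ⟨⟨hSω, hlt⟩, hτ⟩
    rw [hτ, ENat.lt_natCast_add_one_iff] at hlt
    exact ⟨⟨⟨hSω, ne_top_of_le_ne_top (ENat.natCast_ne_top i) hlt⟩, hlt⟩, hτ⟩
  · rintro ⟨⟨⟨hSω, -⟩, hle⟩, hτ⟩
    exact ⟨⟨hSω, by rwa [hτ, ENat.lt_natCast_add_one_iff]⟩, hτ⟩

lemma measurableSet_strictPast_of_lt (hσ : IsStoppingTime F σ) {S : Set Ω}
    (hS : MeasurableSet[hσ.measurableSpace] (S ∩ {ω | σ ω ≠ ⊤}))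
    (hlt : ∀ ω ∈ S, τ ω ≠ ⊤ → σ ω < τ ω) : MeasurableSet[strictPast F τ] S := fun i => by
  obtain ⟨C, hC, hSC⟩ := measurableSet_strictPast_inter_lt (τ := τ) hσ hS i
  refine ⟨C, hC, ?_⟩
  rw [← hSC]
  ext ω
  simp only [mem_inter_iff, mem_ofPred_eq]
  exact ⟨fun ⟨h, hτ⟩ => ⟨⟨h, hlt ω h (by simp [hτ])⟩, hτ⟩, fun ⟨⟨h, _⟩, hτ⟩ => ⟨h, hτ⟩⟩

end StrictPast

section FairCoins

variable {mΩ : MeasurableSpace Ω} {P : Measure Ω}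

lemma measureReal_inter_eq_of_condExp_indicator [IsFiniteMeasure P] {m : MeasurableSpace Ω}
    (hm : m ≤ mΩ) {R : Set Ω} (hR : MeasurableSet[mΩ] R) {c : ℝ}
    (h : P[R.indicator (fun _ => (1 : ℝ)) | m] =ᵐ[P] fun _ => c) {B : Set Ω}
    (hB : MeasurableSet[m] B) : P.real (B ∩ R) = c * P.real B := by
  calc P.real (B ∩ R) = ∫ ω in B, R.indicator (fun _ => (1 : ℝ)) ω ∂P := by
        rw [setIntegral_indicator hR, setIntegral_const, smul_eq_mul, mul_one]
    _ = ∫ ω in B, (P[R.indicator (fun _ => (1 : ℝ)) | m]) ω ∂P :=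
        (setIntegral_condExp hm ((integrable_const (1 : ℝ)).indicator hR) hB).symm
    _ = ∫ _ in B, c ∂P := integral_congr_ae (ae_restrict_of_ae h)
    _ = c * P.real B := by simp [mul_comm]

lemma measure_inter_eq_inter_eq_half [IsFiniteMeasure P] {B : Set Ω} {X Y : Ω → ℝ} {v : ℝ}
    (hv : v ≠ 0) (hX : ∀ ω, X ω = v ∨ X ω = -v) (hY : ∀ ω, Y ω = v ∨ Y ω = -v)
    (hB : MeasurableSet B) (hXm : MeasurableSet {ω | X ω = v})
    (hYm : MeasurableSet {ω | Y ω = -v})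
    (hXY : P (B ∩ {ω | X ω = v}) = P (B ∩ {ω | Y ω = -v})) :
    P (B ∩ {ω | X ω = Y ω} ∩ {ω | X ω = v}) = 2⁻¹ * P (B ∩ {ω | X ω = Y ω}) := by
  have hvv : v ≠ -v := fun h => hv (by linarith)
  set U := B ∩ {ω | X ω = v}
  set V := B ∩ {ω | Y ω = -v}
  have hsymm : P (U \ V) = P (V \ U) := measure_sdiff_symm (hB.inter hXm).nullMeasurableSet
    (hB.inter hYm).nullMeasurableSet hXY (measure_ne_top _ _)
  have hUV : B ∩ {ω | X ω = Y ω} ∩ {ω | X ω = v} = U \ V := by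
    ext ω
    rcases hX ω with h | h <;> rcases hY ω with h' | h' <;> simp [U, V, h, h', hvv, hvv.symm]
  have hXY : B ∩ {ω | X ω = Y ω} = U \ V ∪ V \ U := by
    ext ω
    rcases hX ω with h | h <;> rcases hY ω with h' | h' <;> simp [U, V, h, h', hvv, hvv.symm]
  rw [hUV, hXY, measure_union disjoint_sdiff_sdiff ((hB.inter hYm).diff (hB.inter hXm)), ← hsymm,
    ← two_mul, ← mul_assoc, ENNReal.inv_mul_cancel two_ne_zero ENNReal.ofNat_ne_top, one_mul]

def IsFairCoinSeq (P : Measure Ω) (F : Filtration ℕ mΩ) (ξ : ℕ → Ω → ℝ) : Prop :=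
  ∀ i (B : Set Ω), MeasurableSet[F i] B → ∀ v : ℝ, (v = 1 ∨ v = -1) →
    P (B ∩ {ω | ξ (i + 1) ω = v}) = 2⁻¹ * P B

variable {F : Filtration ℕ mΩ} {ξ : ℕ → Ω → ℝ}

lemma IsFairCoinSeq.neg (h : IsFairCoinSeq P F ξ) : IsFairCoinSeq P F (-ξ) := by
  intro i B hB v hv
  have : {ω | (-ξ) (i + 1) ω = v} = {ω | ξ (i + 1) ω = -v} := by
    ext ω
    simp [neg_eq_iff_eq_neg]
  rw [this]
  exact h i B hB (-v) (by rcases hv with rfl | rfl <;> simp)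

lemma isFairCoinSeq_of_condExp [IsFiniteMeasure P] (hξ : ∀ n, 1 ≤ n → Measurable[F n] (ξ n))
    (h : ∀ n, 1 ≤ n →
      (P[({ω | ξ n ω = 1}).indicator (fun _ => (1 : ℝ)) | F (n - 1)] =ᵐ[P] fun _ => 1 / 2) ∧
      (P[({ω | ξ n ω = -1}).indicator (fun _ => (1 : ℝ)) | F (n - 1)] =ᵐ[P] fun _ => 1 / 2)) :
    IsFairCoinSeq P F ξ := by
  intro i B hB v hv
  have hR : MeasurableSet {ω | ξ (i + 1) ω = v} :=
    F.le _ _ (hξ (i + 1) (by omega) (measurableSet_singleton v))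
  have hc : P[({ω | ξ (i + 1) ω = v}).indicator (fun _ => (1 : ℝ)) | F i] =ᵐ[P] fun _ => 1 / 2 := by
    rcases hv with rfl | rfl
    exacts [(h (i + 1) (by omega)).1, (h (i + 1) (by omega)).2]
  have := measureReal_inter_eq_of_condExp_indicator (F.le i) hR hc hB
  rw [← ENNReal.toReal_eq_toReal_iff' (measure_ne_top _ _) (by finiteness)]
  simpa [measureReal_def] using this

end FairCoins

section Halving

variable {mΩ : MeasurableSpace Ω} {P : Measure Ω} [IsFiniteMeasure P] {F : Filtration ℕ mΩ}
  {ξ η : ℕ → Ω → ℝ}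
  (hξ : ∀ n, 1 ≤ n → Measurable[F n] (ξ n)) (hη : ∀ n, 1 ≤ n → Measurable[F n] (η n))
  (hξv : ∀ n ω, ξ n ω = 1 ∨ ξ n ω = -1) (hηv : ∀ n ω, η n ω = 1 ∨ η n ω = -1)
  (hfξ : IsFairCoinSeq P F ξ) (hfη : IsFairCoinSeq P F η)
include hξ hη hξv hηv hfξ hfη

lemma measure_inter_xiAlpha_eq_half {ζ : ℕ → Ω → ℝ} {N : ℕ} (hN : 1 ≤ N) {v : ℝ}
    (hv : v = 1 ∨ v = -1) {E : Set Ω} (hE : MeasurableSet[strictPast F (alphaProc ξ η N)] E)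
    {m : MeasurableSpace Ω} (hEtop : MeasurableSet[m] (E ∩ {ω | alphaProc ξ η N ω = ⊤}))
    (hind : Indep m (MeasurableSpace.comap (ζ N) inferInstance) P)
    (hζ : P {ω | ζ N ω = v} = 2⁻¹) :
    P (E ∩ {ω | xiAlpha ξ η ζ N ω = v}) = 2⁻¹ * P E := by
  have hα := isStoppingTime_alphaProc hξ hη hN
  have hfib (b : ℕ∞) : MeasurableSet[mΩ] {ω | alphaProc ξ η N ω = b} := by
    induction b using ENat.recTopCoe
    exacts [hα.measurableSet_eq_top, F.le _ _ (hα.measurableSet_eq _)]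
  refine measure_inter_eq_mul_of_fiberwise hfib fun b => ?_
  induction b using ENat.recTopCoe with
  | top =>
    have : E ∩ {ω | alphaProc ξ η N ω = ⊤} ∩ {ω | xiAlpha ξ η ζ N ω = v}
        = E ∩ {ω | alphaProc ξ η N ω = ⊤} ∩ {ω | ζ N ω = v} := by
      ext ω
      simp +contextual [xiAlpha_of_eq_top]
    rw [this, (Indep_iff _ _ _).1 hind _ {ω | ζ N ω = v} hEtop
      ⟨{v}, measurableSet_singleton v, rfl⟩, hζ, mul_comm]
  | coe t =>
    cases t with
    | zero => simp [alphaProc_ne_zero hN]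
    | succ i =>
      obtain ⟨C, hC, hEC⟩ := hE i
      set B := C ∩ {ω | Tproc ξ η i ω + 1 = N}
      have hB : MeasurableSet[F i] B :=
        hC.inter (measurable_Tproc hξ hη i (MeasurableSet.of_discrete (s := {t | t + 1 = N})))
      have hfiber : E ∩ {ω | alphaProc ξ η N ω = ↑(i + 1)}
          = B ∩ {ω | ξ (i + 1) ω = η (i + 1) ω} := by
        rw [Nat.cast_succ, hEC]
        ext ω
        simp [B, alphaProc_eq_add_one_iff hN, and_assoc]
      have hfiber_xi : E ∩ {ω | alphaProc ξ η N ω = ↑(i + 1)} ∩ {ω | xiAlpha ξ η ζ N ω = v}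
          = E ∩ {ω | alphaProc ξ η N ω = ↑(i + 1)} ∩ {ω | ξ (i + 1) ω = v} := by
        ext ω
        simp only [mem_inter_iff, mem_ofPred_eq, and_congr_right_iff]
        exact fun h => by rw [xiAlpha_of_eq_coe ζ h.2]
      have hv' : -v = 1 ∨ -v = -1 := by rcases hv with rfl | rfl <;> simp
      have hsign (X : Ω → ℝ) (hX : ∀ ω, X ω = 1 ∨ X ω = -1) (ω : Ω) : X ω = v ∨ X ω = -v := by
        rcases hv with rfl | rfl <;> rcases hX ω with h | h <;> simp [h]
      rw [hfiber_xi, hfiber]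
      exact measure_inter_eq_inter_eq_half (by rcases hv with rfl | rfl <;> norm_num)
        (hsign _ (hξv _)) (hsign _ (hηv _)) (F.le i _ hB)
        (F.le _ _ (hξ _ (by omega) (measurableSet_singleton _)))
        (F.le _ _ (hη _ (by omega) (measurableSet_singleton _)))
        (by rw [hfξ i B hB v hv, hfη i B hB (-v) hv'])

lemma measure_xiAlpha_last_eq_half {η' ζ ψ : ℕ → Ω → ℝ}
    (hη' : ∀ n, 1 ≤ n → Measurable[F n] (η' n)) {𝒢 : MeasurableSpace Ω} (hF𝒢 : ∀ t, F t ≤ 𝒢)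
    {N M : ℕ} (hN : 1 ≤ N) (hM : 1 ≤ M) (hζ𝒢 : ∀ n ≠ N, Measurable[𝒢] (ζ n))
    (hψ𝒢 : ∀ n, Measurable[𝒢] (ψ n))
    (hind : Indep 𝒢 (MeasurableSpace.comap (ζ N) inferInstance) P)
    {ι κ : Type*} [Countable ι] [Countable κ] {nn : ι → ℕ} {mm : κ → ℕ}
    (hn1 : ∀ i, 1 ≤ nn i) (hnN : ∀ i, nn i < N) (hm1 : ∀ j, 1 ≤ mm j) (hmM : ∀ j, mm j ≤ M)
    (x : ι → ℝ) (y : κ → ℝ) {v : ℝ} (hv : v = 1 ∨ v = -1) (hζ : P {ω | ζ N ω = v} = 2⁻¹) :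
    P ({ω | ∀ i, xiAlpha ξ η ζ (nn i) ω = x i} ∩ {ω | ∀ j, xiAlpha ξ η' ψ (mm j) ω = y j}
        ∩ {ω | alphaProc ξ η' M ω < alphaProc ξ η N ω} ∩ {ω | xiAlpha ξ η ζ N ω = v})
      = 2⁻¹ * P ({ω | ∀ i, xiAlpha ξ η ζ (nn i) ω = x i}
        ∩ {ω | ∀ j, xiAlpha ξ η' ψ (mm j) ω = y j}
        ∩ {ω | alphaProc ξ η' M ω < alphaProc ξ η N ω}) := by
  have hαN := isStoppingTime_alphaProc hξ hη hN
  have hα'M := isStoppingTime_alphaProc hξ hη' hM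
  refine measure_inter_xiAlpha_eq_half hξ hη hξv hηv hfξ hfη hN hv ?_ ?_ hind hζ
  · rw [inter_assoc]
    refine .inter ?_ (measurableSet_strictPast_inter_lt hα'M
      (measurableSet_forall_xiAlpha_inter_ne_top hξ hη' ψ hm1 hmM hM y))
    rw [ofPred_forall]
    exact .iInter fun i => measurableSet_strictPast_of_lt (isStoppingTime_alphaProc hξ hη (hn1 i))
      (measurableSet_xiAlpha_inter_ne_top hξ hη ζ (hn1 i) le_rfl (x i))
      fun ω _ hω => alphaProc_lt_of_lt (hn1 i) (hnN i) hω
  · have hsup : (⨆ t, F t : MeasurableSpace Ω) ≤ 𝒢 := iSup_le hF𝒢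
    refine .inter (.inter (.inter ?_ ?_) ?_) (hsup _ hαN.measurableSet_eq_top')
    · rw [ofPred_forall]
      exact .iInter fun i => measurableSet_xiAlpha hξ hη hF𝒢 (hζ𝒢 _ (hnN i).ne) (hn1 i) _
    · rw [ofPred_forall]
      exact .iInter fun j => measurableSet_xiAlpha hξ hη' hF𝒢 (hψ𝒢 _) (hm1 j) _
    · have : {ω | alphaProc ξ η' M ω < alphaProc ξ η N ω}
          = {ω | alphaProc ξ η N ω ≤ alphaProc ξ η' M ω}ᶜ := by
        ext ω
        simp
      rw [this]
      exact hsup _ (hα'M.measurableSpace_le' _ (hαN.measurableSet_stopping_time_le hα'M).compl)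

lemma measure_xiAlpha_fin_last_eq_half {η' ζ ψ : ℕ → Ω → ℝ}
    (hη' : ∀ n, 1 ≤ n → Measurable[F n] (η' n)) {𝒢 : MeasurableSpace Ω} (hF𝒢 : ∀ t, F t ≤ 𝒢)
    {k l : ℕ} {nn : Fin k → ℕ} {mm : Fin l → ℕ} (hn1 : ∀ i, 1 ≤ nn i) (hm1 : ∀ j, 1 ≤ mm j)
    (hnmono : StrictMono nn) (hmmono : Monotone mm) {kk : Fin k} (hkk : (kk : ℕ) + 1 = k)
    {ll : Fin l} (hll : (ll : ℕ) + 1 = l) (hζ𝒢 : ∀ n ≠ nn kk, Measurable[𝒢] (ζ n))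
    (hψ𝒢 : ∀ n, Measurable[𝒢] (ψ n))
    (hind : Indep 𝒢 (MeasurableSpace.comap (ζ (nn kk)) inferInstance) P)
    (x : Fin k → ℝ) (y : Fin l → ℝ) (hx : x kk = 1 ∨ x kk = -1)
    (hζ : P {ω | ζ (nn kk) ω = x kk} = 2⁻¹) :
    P ({ω | ∀ i, xiAlpha ξ η ζ (nn i) ω = x i} ∩ {ω | ∀ j, xiAlpha ξ η' ψ (mm j) ω = y j}
        ∩ {ω | alphaProc ξ η' (mm ll) ω < alphaProc ξ η (nn kk) ω})
      = 2⁻¹ * P ({ω | ∀ i : Fin k, (i : ℕ) + 1 < k → xiAlpha ξ η ζ (nn i) ω = x i}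
        ∩ {ω | ∀ j, xiAlpha ξ η' ψ (mm j) ω = y j}
        ∩ {ω | alphaProc ξ η' (mm ll) ω < alphaProc ξ η (nn kk) ω}) := by
  have hsplit : {ω | ∀ i, xiAlpha ξ η ζ (nn i) ω = x i}
      = {ω | ∀ i : Fin k, (i : ℕ) + 1 < k → xiAlpha ξ η ζ (nn i) ω = x i}
        ∩ {ω | xiAlpha ξ η ζ (nn kk) ω = x kk} := by
    ext ω
    simp only [mem_inter_iff, mem_ofPred_eq]
    refine ⟨fun h => ⟨fun i _ => h i, h kk⟩, fun ⟨h, hlast⟩ i => ?_⟩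
    by_cases hi : (i : ℕ) + 1 < k
    · exact h i hi
    · rwa [show i = kk from Fin.ext (by omega)]
  have hinit : {ω | ∀ i : Fin k, (i : ℕ) + 1 < k → xiAlpha ξ η ζ (nn i) ω = x i}
      = {ω | ∀ i : {i : Fin k // (i : ℕ) + 1 < k}, xiAlpha ξ η ζ (nn i) ω = x i} := by
    simp only [Subtype.forall]
  rw [hsplit, inter_right_comm _ {ω | xiAlpha ξ η ζ (nn kk) ω = x kk},
    inter_right_comm _ {ω | xiAlpha ξ η ζ (nn kk) ω = x kk}, hinit]
  exact measure_xiAlpha_last_eq_half hξ hη hξv hηv hfξ hfη hη' hF𝒢 (hn1 kk) (hm1 ll) hζ𝒢 hψ𝒢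
    hind (nn := fun i : {i : Fin k // (i : ℕ) + 1 < k} => nn i) (fun i => hn1 i)
    (fun i => hnmono (Fin.lt_def.2 (by have := i.2; omega))) hm1
    (fun j => hmmono (Fin.le_def.2 (by omega))) _ y hx hζ

end Halving

theorem stmt_7
    {Ω : Type*} [mΩ : MeasurableSpace Ω] (P : Measure Ω) [IsProbabilityMeasure P]
    (F : MeasureTheory.Filtration ℕ mΩ)
    (ξ η : ℕ → Ω → ℝ)
    (hξm : ∀ n, 1 ≤ n → Measurable[F n] (ξ n))
    (hηm : ∀ n, 1 ≤ n → Measurable[F n] (η n))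
    (hξv : ∀ n ω, ξ n ω = 1 ∨ ξ n ω = -1)
    (hηv : ∀ n ω, η n ω = 1 ∨ η n ω = -1)
    (hhalf : ∀ n, 1 ≤ n →
      (P[({ω | ξ n ω = 1}).indicator (fun _ => (1 : ℝ)) | F (n - 1)] =ᵐ[P] fun _ => 1 / 2) ∧
      (P[({ω | ξ n ω = -1}).indicator (fun _ => (1 : ℝ)) | F (n - 1)] =ᵐ[P] fun _ => 1 / 2) ∧
      (P[({ω | η n ω = 1}).indicator (fun _ => (1 : ℝ)) | F (n - 1)] =ᵐ[P] fun _ => 1 / 2) ∧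
      (P[({ω | η n ω = -1}).indicator (fun _ => (1 : ℝ)) | F (n - 1)] =ᵐ[P] fun _ => 1 / 2))
    (ζ ψ : ℕ → Ω → ℝ)
    (hζm : ∀ n, Measurable (ζ n)) (hψm : ∀ n, Measurable (ψ n))
    (hζd : ∀ n, P {ω | ζ n ω = 1} = 2⁻¹ ∧ P {ω | ζ n ω = -1} = 2⁻¹)
    (hψd : ∀ n, P {ω | ψ n ω = 1} = 2⁻¹ ∧ P {ω | ψ n ω = -1} = 2⁻¹)
    (hindep : iIndep (fun i : ℕ ⊕ ℕ ⊕ Unit =>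
      Sum.elim (fun n => MeasurableSpace.comap (ζ n) inferInstance)
        (Sum.elim (fun n => MeasurableSpace.comap (ψ n) inferInstance)
          (fun _ => ⨆ n, (F n : MeasurableSpace Ω))) i) P)
    (k l : ℕ) (hk : 1 ≤ k) (hl : 1 ≤ l)
    (nn : Fin k → ℕ) (mm : Fin l → ℕ)
    (hn1 : ∀ i, 1 ≤ nn i) (hm1 : ∀ j, 1 ≤ mm j)
    (hnmono : StrictMono nn) (hmmono : StrictMono mm)
    (x : Fin k → ℝ) (y : Fin l → ℝ)
    (hx : ∀ i, x i = 1 ∨ x i = -1) (hy : ∀ j, y j = 1 ∨ y j = -1) :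
    (P ({ω | ∀ i, xiAlpha ξ η ζ (nn i) ω = x i} ∩ {ω | ∀ j, xiBeta ξ η ψ (mm j) ω = y j}
          ∩ {ω | betaProc ξ η (mm ⟨l - 1, by omega⟩) ω
              < alphaProc ξ η (nn ⟨k - 1, by omega⟩) ω})
      = 2⁻¹ * P ({ω | ∀ i : Fin k, (i : ℕ) + 1 < k → xiAlpha ξ η ζ (nn i) ω = x i}
            ∩ {ω | ∀ j, xiBeta ξ η ψ (mm j) ω = y j}
            ∩ {ω | betaProc ξ η (mm ⟨l - 1, by omega⟩) ω
                < alphaProc ξ η (nn ⟨k - 1, by omega⟩) ω})) ∧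
    (P ({ω | ∀ i, xiAlpha ξ η ζ (nn i) ω = x i} ∩ {ω | ∀ j, xiBeta ξ η ψ (mm j) ω = y j}
          ∩ {ω | alphaProc ξ η (nn ⟨k - 1, by omega⟩) ω
              < betaProc ξ η (mm ⟨l - 1, by omega⟩) ω})
      = 2⁻¹ * P ({ω | ∀ i, xiAlpha ξ η ζ (nn i) ω = x i}
            ∩ {ω | ∀ j : Fin l, (j : ℕ) + 1 < l → xiBeta ξ η ψ (mm j) ω = y j}
            ∩ {ω | alphaProc ξ η (nn ⟨k - 1, by omega⟩) ω
                < betaProc ξ η (mm ⟨l - 1, by omega⟩) ω})) := by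
  have hfξ := isFairCoinSeq_of_condExp hξm fun n hn => ⟨(hhalf n hn).1, (hhalf n hn).2.1⟩
  have hfη := isFairCoinSeq_of_condExp hηm fun n hn => ⟨(hhalf n hn).2.2.1, (hhalf n hn).2.2.2⟩
  have hnegηm : ∀ n, 1 ≤ n → Measurable[F n] ((-η) n) := fun n hn => (hηm n hn).neg
  have hnegηv : ∀ n ω, (-η) n ω = 1 ∨ (-η) n ω = -1 := fun n ω => by
    rcases hηv n ω with h | h <;> simp [h]
  have hcoin {χ : ℕ → Ω → ℝ} (hχ : ∀ n, P {ω | χ n ω = 1} = 2⁻¹ ∧ P {ω | χ n ω = -1} = 2⁻¹)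
      (n : ℕ) {v : ℝ} (hv : v = 1 ∨ v = -1) : P {ω | χ n ω = v} = 2⁻¹ := by
    rcases hv with rfl | rfl
    exacts [(hχ n).1, (hχ n).2]
  set 𝓜 : ℕ ⊕ ℕ ⊕ Unit → MeasurableSpace Ω := fun i =>
    Sum.elim (fun n => MeasurableSpace.comap (ζ n) inferInstance)
      (Sum.elim (fun n => MeasurableSpace.comap (ψ n) inferInstance)
        (fun _ => ⨆ n, (F n : MeasurableSpace Ω))) i
  have h_le : ∀ i, 𝓜 i ≤ mΩ := by
    rintro (n | n | -)
    exacts [(hζm n).comap_le, (hψm n).comap_le, iSup_le F.le]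
  have hF {a : ℕ ⊕ ℕ ⊕ Unit} (ha : a ≠ .inr (.inr ())) (t : ℕ) :
      (F t : MeasurableSpace Ω) ≤ ⨆ j ∈ ({a}ᶜ : Set _), 𝓜 j :=
    (le_iSup _ t).trans (le_iSup_compl_singleton (f := 𝓜) ha.symm)
  rw [betaProc_eq_alphaProc_neg hξv hηv, xiBeta_eq_xiAlpha_neg ψ hξv hηv]
  set N := nn ⟨k - 1, by omega⟩
  set M := mm ⟨l - 1, by omega⟩
  constructor
  · exact measure_xiAlpha_fin_last_eq_half hξm hηm hξv hηv hfξ hfη hnegηm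
      (hF (a := .inl N) (by simp)) hn1 hm1 hnmono hmmono.monotone (by simp; omega) (by simp; omega)
      (fun n hn => measurable_iff_comap_le.2
        (le_iSup_compl_singleton (f := 𝓜) (i := .inl N) (j := .inl n) (by simpa)))
      (fun n => measurable_iff_comap_le.2
        (le_iSup_compl_singleton (f := 𝓜) (i := .inl N) (j := .inr (.inl n)) (by simp)))
      (hindep.indep_iSup_compl_singleton h_le _) x y (hx _) (hcoin hζd _ (hx _))
  · rw [inter_comm {ω | ∀ i, xiAlpha ξ η ζ (nn i) ω = x i},
      inter_comm {ω | ∀ i, xiAlpha ξ η ζ (nn i) ω = x i}]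
    exact measure_xiAlpha_fin_last_eq_half hξm hnegηm hξv hnegηv hfξ hfη.neg hηm
      (hF (a := .inr (.inl M)) (by simp)) hm1 hn1 hmmono hnmono.monotone (by simp; omega)
      (by simp; omega)
      (fun n hn => measurable_iff_comap_le.2
        (le_iSup_compl_singleton (f := 𝓜) (i := .inr (.inl M)) (j := .inr (.inl n)) (by simpa)))
      (fun n => measurable_iff_comap_le.2
        (le_iSup_compl_singleton (f := 𝓜) (i := .inr (.inl M)) (j := .inl n) (by simp)))
      (hindep.indep_iSup_compl_singleton h_le _) y x (hy _) (hcoin hψd _ (hy _))
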